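/- arXiv:math/0207100 — 4 statements merged into one kernel-verified Lean document; each statement's English description precedes it below -/
import Mathlib

section
/- For any simple graph G and any vertex v of G, m(G) ≤ m(G − v) + m(G − N[v]), where G − v is G with v deleted and G − N[v] is G with the closed neighborhood of v deleted. -/
/-- `I` is an independent set of the simple graph `G`. -/
def IsIndepSet {V : Type*} (G : SimpleGraph V) (I : Set V) : Prop :=
  ∀ ⦃u⦄, u ∈ I → ∀ ⦃w⦄, w ∈ I → ¬ G.Adj u w

/-- `I` is a maximal independent set of the simple graph `G`. -/
def IsMaxIndepSet {V : Type*} (G : SimpleGraph V) (I : Set V) : Prop :=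
  IsIndepSet G I ∧ ∀ J, IsIndepSet G J → I ⊆ J → J = I

/-- `numMIS G` is the number of maximal independent sets of `G`. -/
noncomputable def numMIS {V : Type*} (G : SimpleGraph V) : ℕ :=
  {I : Set V | IsMaxIndepSet G I}.ncard

/-- The closed neighborhood of `v` in `G`. -/
def closedNbhd {V : Type*} (G : SimpleGraph V) (v : V) : Set V :=
  insert v (G.neighborSet v)

/-! Split the maximal independent sets `I` of `G` according to whether `v ∈ I`. If not, `I`
restricts to a maximal independent set of `G - v`; if so, `I = {v} ∪ I'` with `I'` a maximal
independent set of `G - N[v]`. Both restrictions are injective, since the part of `I` outside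
the retained vertex set is fixed (`∅`, resp. `{v}`). -/

section

variable {V : Type*} {G : SimpleGraph V} {s : Set V}

/-- An independent extension of the trace inside `s`, together with `I \ s`, is an independent
extension of `I` in `G`. -/
theorem IsMaxIndepSet.preimage_val {I : Set V} (hI : IsMaxIndepSet G I)
    (hs : ∀ u ∈ I \ s, ∀ w ∈ s, ¬ G.Adj u w) :
    IsMaxIndepSet (G.induce s) (Subtype.val ⁻¹' I) := by
  refine ⟨fun a ha b hb hab => hI.1 ha hb hab, fun J hJ hIJ => ?_⟩
  have hglue : IsIndepSet G (I \ s ∪ Subtype.val '' J) := by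
    rintro u (hu | ⟨a, ha, rfl⟩) w (hw | ⟨b, hb, rfl⟩) huw
    · exact hI.1 hu.1 hw.1 huw
    · exact hs u hu b b.2 huw
    · exact hs w hw a a.2 huw.symm
    · exact hJ ha hb huw
  have hsub : I ⊆ I \ s ∪ Subtype.val '' J := fun u hu => by
    by_cases hus : u ∈ s
    exacts [Or.inr ⟨⟨u, hus⟩, hIJ hu, rfl⟩, Or.inl ⟨hu, hus⟩]
  have heq := hI.2 _ hglue hsub
  refine Set.Subset.antisymm (fun a ha => ?_) hIJ
  rw [Set.mem_preimage, ← heq]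
  exact Or.inr ⟨a, ha, rfl⟩

theorem ncard_le_numMIS_induce [Finite V] {𝓕 : Set (Set V)} (K : Set V)
    (hmax : ∀ I ∈ 𝓕, IsMaxIndepSet G I) (hK : ∀ I ∈ 𝓕, I \ s = K)
    (hKs : ∀ u ∈ K, ∀ w ∈ s, ¬ G.Adj u w) :
    𝓕.ncard ≤ numMIS (G.induce s) := by
  refine Set.ncard_le_ncard_of_injOn (fun I => Subtype.val ⁻¹' I)
    (fun I hI => (hmax I hI).preimage_val (hK I hI ▸ hKs)) (fun I hI J hJ hIJ => ?_)
  rw [← Set.inter_union_sdiff I s, ← Set.inter_union_sdiff J s, hK I hI, hK J hJ,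
    Set.inter_comm I, Set.inter_comm J, Subtype.preimage_coe_eq_preimage_coe_iff.mp hIJ]

theorem IsIndepSet.sdiff_compl_closedNbhd {I : Set V} {v : V} (hI : IsIndepSet G I)
    (hv : v ∈ I) : I \ (closedNbhd G v)ᶜ = {v} := by
  ext u
  simp only [Set.mem_sdiff, Set.mem_compl_iff, not_not, closedNbhd, Set.mem_insert_iff,
    SimpleGraph.mem_neighborSet, Set.mem_singleton_iff]
  refine ⟨fun ⟨hu, huv⟩ => huv.resolve_right fun hadj => hI hv hu hadj, ?_⟩
  rintro rfl
  exact ⟨hv, Or.inl rfl⟩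

end

theorem numMIS_le_del_add_delClosedNbhd {V : Type*} [Fintype V]
    (G : SimpleGraph V) (v : V) :
    numMIS G ≤ numMIS (G.induce {u | u ≠ v}) +
      numMIS (G.induce ((closedNbhd G v)ᶜ)) := by
  set 𝓜 := {I : Set V | IsMaxIndepSet G I}
  have hsplit := Set.ncard_inter_add_ncard_sdiff_eq_ncard 𝓜 {I | v ∈ I}
  have hwith : (𝓜 ∩ {I | v ∈ I}).ncard ≤ numMIS (G.induce ((closedNbhd G v)ᶜ)) :=
    ncard_le_numMIS_induce {v} (fun I hI => hI.1)
      (fun I hI => hI.1.1.sdiff_compl_closedNbhd hI.2)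
      (fun u hu w hw hadj => hw (Or.inr (hu ▸ hadj)))
  have hwithout : (𝓜 \ {I | v ∈ I}).ncard ≤ numMIS (G.induce {u | u ≠ v}) := by
    refine ncard_le_numMIS_induce ∅ (fun I hI => hI.1) (fun I hI => ?_) (by simp)
    exact Set.eq_empty_of_forall_notMem fun u ⟨hu, huv⟩ => hI.2 (not_not.mp huv ▸ hu)
  rw [numMIS, ← hsplit]
  omega
end

section
/- If G is a simple graph containing a complete subgraph B that has at least one vertex adjacent in G only to other vertices of B, then m(G) = Σ_{v ∈ V(B)} m(G − N[v]). -/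
/-!
Every maximal independent set `I` meets the closed neighbourhood of the vertex `w`, which lies
inside the clique `B`, and being independent it meets `B` in at most one vertex. So the maximal
independent sets are partitioned according to their vertex in `B`, and those containing `v`
correspond to the maximal independent sets of `G - N[v]` via `I ↦ I \ {v}`.
-/

theorem Set.ncard_eq_sum_ncard_of_existsUnique {α β : Type*} {s : Set α} (hs : s.Finite)
    (B : Finset β) (r : β → α → Prop) (h : ∀ a ∈ s, ∃! b, b ∈ B ∧ r b a) :
    s.ncard = ∑ b ∈ B, {a | a ∈ s ∧ r b a}.ncard := by
  have hcover : s = ⋃ b ∈ (B : Set β), {a | a ∈ s ∧ r b a} := by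
    ext a
    simp only [Set.mem_iUnion, Set.mem_ofPred_eq, Finset.mem_coe, exists_prop]
    refine ⟨fun ha => ?_, fun ⟨_, _, ha, _⟩ => ha⟩
    obtain ⟨b, ⟨hb, hba⟩, -⟩ := h a ha
    exact ⟨b, hb, ha, hba⟩
  have hdisj : (B : Set β).PairwiseDisjoint fun b => {a | a ∈ s ∧ r b a} :=
    fun b hb c hc hbc => Set.disjoint_left.mpr fun a ⟨ha, hba⟩ ⟨_, hca⟩ =>
      hbc ((h a ha).unique ⟨hb, hba⟩ ⟨hc, hca⟩)
  calc s.ncard = (⋃ b ∈ (B : Set β), {a | a ∈ s ∧ r b a}).ncard := congrArg _ hcover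
    _ = ∑ b ∈ B, {a | a ∈ s ∧ r b a}.ncard := by
      rw [B.finite_toSet.ncard_biUnion (fun b _ => hs.subset fun _ ha => ha.1) hdisj,
        finsum_mem_coe_finset]

section MaxIndepSet

variable {V : Type*} {G : SimpleGraph V}

lemma isIndepSet_insert {v : V} {I : Set V} :
    IsIndepSet G (insert v I) ↔ IsIndepSet G I ∧ ∀ u ∈ I, ¬ G.Adj v u := by
  refine ⟨fun h => ⟨fun u hu w hw => h (.inr hu) (.inr hw), fun u hu => h (.inl rfl) (.inr hu)⟩,
    fun ⟨hI, hv⟩ => ?_⟩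
  rintro u (rfl | hu) w (rfl | hw) hadj
  · exact G.loopless.irrefl _ hadj
  · exact hv w hw hadj
  · exact hv u hu hadj.symm
  · exact hI hu hw hadj

lemma isMaxIndepSet_iff {I : Set V} :
    IsMaxIndepSet G I ↔ IsIndepSet G I ∧ ∀ u ∉ I, ∃ w ∈ I, G.Adj u w := by
  refine ⟨fun ⟨hI, hmax⟩ => ⟨hI, fun u hu => ?_⟩, fun ⟨hI, hdom⟩ => ⟨hI, fun J hJ hIJ => ?_⟩⟩
  · by_contra! hnadj
    exact hu (hmax _ (isIndepSet_insert.mpr ⟨hI, hnadj⟩) (Set.subset_insert u I) ▸ .inl rfl)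
  · refine Set.Subset.antisymm (fun u huJ => ?_) hIJ
    by_contra huI
    obtain ⟨w, hwI, hadj⟩ := hdom u huI
    exact hJ huJ (hIJ hwI) hadj

lemma IsMaxIndepSet.exists_mem_closedNbhd {I : Set V} (hI : IsMaxIndepSet G I) (v : V) :
    ∃ u ∈ I, u ∈ closedNbhd G v := by
  by_cases hv : v ∈ I
  · exact ⟨v, hv, .inl rfl⟩
  · obtain ⟨w, hwI, hadj⟩ := (isMaxIndepSet_iff.mp hI).2 v hv
    exact ⟨w, hwI, .inr hadj⟩

lemma IsMaxIndepSet.existsUnique_mem_clique {I B : Set V} (hI : IsMaxIndepSet G I)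
    (hB : G.IsClique B) (hw : ∃ w ∈ B, ∀ u, G.Adj w u → u ∈ B) :
    ∃! v, v ∈ B ∧ v ∈ I := by
  obtain ⟨w, hwB, hwN⟩ := hw
  obtain ⟨v, hvI, hvw⟩ := hI.exists_mem_closedNbhd w
  have hvB : v ∈ B := by
    rcases hvw with rfl | hadj
    exacts [hwB, hwN v hadj]
  refine ⟨v, ⟨hvB, hvI⟩, fun u ⟨huB, huI⟩ => ?_⟩
  by_contra huv
  exact hI.1 huI hvI (hB huB hvB huv)

end MaxIndepSet

section ClosedNbhd

variable {V : Type*} {G : SimpleGraph V} {v : V}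

lemma mem_compl_closedNbhd {u : V} : u ∈ (closedNbhd G v)ᶜ ↔ u ≠ v ∧ ¬ G.Adj v u := by
  simp [closedNbhd, not_or]

lemma IsIndepSet.insert_inter_compl_closedNbhd {I : Set V} (hI : IsIndepSet G I) (hv : v ∈ I) :
    insert v ((closedNbhd G v)ᶜ ∩ I) = I := by
  refine Set.Subset.antisymm (Set.insert_subset hv Set.inter_subset_right) fun u hu => ?_
  by_cases huv : u = v
  · exact .inl huv
  · exact .inr ⟨mem_compl_closedNbhd.mpr ⟨huv, hI hv hu⟩, hu⟩

lemma IsMaxIndepSet.preimage_val_compl_closedNbhd {I : Set V} (hI : IsMaxIndepSet G I)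
    (hv : v ∈ I) : IsMaxIndepSet (G.induce (closedNbhd G v)ᶜ) (Subtype.val ⁻¹' I) := by
  refine isMaxIndepSet_iff.mpr ⟨fun a ha b hb hadj => hI.1 ha hb hadj, fun a ha => ?_⟩
  obtain ⟨w, hwI, hadj⟩ := (isMaxIndepSet_iff.mp hI).2 a ha
  have hwv : w ≠ v := by
    rintro rfl
    exact (mem_compl_closedNbhd.mp a.2).2 hadj.symm
  exact ⟨⟨w, mem_compl_closedNbhd.mpr ⟨hwv, hI.1 hv hwI⟩⟩, hwI, hadj⟩

lemma IsMaxIndepSet.insert_image_val {J : Set ((closedNbhd G v)ᶜ : Set V)}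
    (hJ : IsMaxIndepSet (G.induce (closedNbhd G v)ᶜ) J) :
    IsMaxIndepSet G (insert v (Subtype.val '' J)) := by
  refine isMaxIndepSet_iff.mpr ⟨isIndepSet_insert.mpr ⟨?_, ?_⟩, fun u hu => ?_⟩
  · rintro _ ⟨a, ha, rfl⟩ _ ⟨b, hb, rfl⟩ hadj
    exact hJ.1 ha hb hadj
  · rintro _ ⟨a, -, rfl⟩
    exact (mem_compl_closedNbhd.mp a.2).2
  rw [Set.mem_insert_iff, not_or] at hu
  by_cases huN : u ∈ closedNbhd G v
  · obtain rfl | hadj := huN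
    exacts [absurd rfl hu.1, ⟨v, .inl rfl, hadj.symm⟩]
  · obtain ⟨b, hb, hadj⟩ := (isMaxIndepSet_iff.mp hJ).2 ⟨u, huN⟩ fun h => hu.2 ⟨_, h, rfl⟩
    exact ⟨b, .inr ⟨b, hb, rfl⟩, hadj⟩

lemma numMIS_induce_compl_closedNbhd (v : V) :
    numMIS (G.induce (closedNbhd G v)ᶜ) = {I | IsMaxIndepSet G I ∧ v ∈ I}.ncard := by
  refine Set.BijOn.ncard_eq (f := fun J => insert v (Subtype.val '' J))
    (Set.InvOn.bijOn (f' := fun I => Subtype.val ⁻¹' I) ⟨fun J _ => ?_, fun I hI => ?_⟩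
      (fun J hJ => ⟨IsMaxIndepSet.insert_image_val hJ, .inl rfl⟩)
      (fun I hI => hI.1.preimage_val_compl_closedNbhd hI.2))
  · ext a
    exact (or_iff_right (mem_compl_closedNbhd.mp a.2).1).trans Subtype.val_injective.mem_set_image
  · simp only [Subtype.image_preimage_coe]
    exact hI.1.1.insert_inter_compl_closedNbhd hI.2

end ClosedNbhd

theorem numMIS_eq_sum_over_clique_general {V : Type*} [Fintype V]
    (G : SimpleGraph V) (B : Finset V) (hB : G.IsClique (B : Set V))
    (hw : ∃ w ∈ B, ∀ u, G.Adj w u → u ∈ B) :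
    numMIS G = ∑ v ∈ B, numMIS (G.induce ((closedNbhd G v)ᶜ)) := by
  have hpartition := Set.ncard_eq_sum_ncard_of_existsUnique (s := {I | IsMaxIndepSet G I})
    (Set.toFinite _) B (fun v I => v ∈ I) fun I hI => hI.existsUnique_mem_clique hB hw
  rw [numMIS, hpartition]
  exact Finset.sum_congr rfl fun v _ => (numMIS_induce_compl_closedNbhd v).symm

theorem numMIS_eq_sum_over_clique {V : Type*} [Fintype V] [DecidableEq V]
    (G : SimpleGraph V) (B : Finset V) (hB : G.IsClique (B : Set V))
    (hw : ∃ w ∈ B, ∀ u, G.Adj w u → u ∈ B) :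
    numMIS G = ∑ v ∈ B, numMIS (G.induce ((closedNbhd G v)ᶜ)) :=
  numMIS_eq_sum_over_clique_general G B hB hw
end

section
/- Define g(n,r) = 3^r · 2^{(n−3r)/2} if n ≡ r (mod 2) and g(n,r) = 3^{r−1} · 2^{(n−3r+3)/2} if n ≢ r (mod 2), and set g(n,0) = 2^⌊n/2⌋. Then for integers r > q ≥ 0 and n ≥ 3r − 1, g(n,r) ≥ g(n,q), with equality if and only if n and r have different parity and q = r − 1. -/
/-! Raising `r` to `r + 1` multiplies `g n r` by `9/8` (by `3/2` when `r = 0`) if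
`n ≡ r + 1 (mod 2)`, and leaves it unchanged otherwise. Since consecutive steps alternate in parity, `g n` is monotone in `r`, and
two or more steps always include a strict one. -/

/-- The function `g(n,r)`: `3^r·2^{(n−3r)/2}` if `n ≡ r (mod 2)`,
`3^{r−1}·2^{(n−3r+3)/2}` if `n ≢ r (mod 2)`, with `g(n,0) = 2^⌊n/2⌋`. -/
def g (n r : ℕ) : ℕ :=
  if r = 0 then 2 ^ (n / 2)
  else if n % 2 = r % 2 then 3 ^ r * 2 ^ ((n - 3 * r) / 2)
  else 3 ^ (r - 1) * 2 ^ ((n - 3 * r + 3) / 2)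

section Step

variable {n r : ℕ}

lemma g_zero : g n 0 = 2 ^ (n / 2) := if_pos rfl

lemma g_of_mod_eq (hr : r ≠ 0) (hp : n % 2 = r % 2) : g n r = 3 ^ r * 2 ^ ((n - 3 * r) / 2) := by
  rw [g, if_neg hr, if_pos hp]

lemma g_of_mod_ne (hr : r ≠ 0) (hp : n % 2 ≠ r % 2) :
    g n r = 3 ^ (r - 1) * 2 ^ ((n - 3 * r + 3) / 2) := by
  rw [g, if_neg hr, if_neg hp]

lemma g_lt_g_succ : ∀ {r}, 3 * r + 2 ≤ n → n % 2 = (r + 1) % 2 → g n r < g n (r + 1)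
  | 0, hn, hp => by
    rw [zero_add] at hp ⊢
    rw [g_zero, g_of_mod_eq one_ne_zero hp, show n / 2 = (n - 3 * 1) / 2 + 1 by omega, pow_succ]
    have : 0 < 2 ^ ((n - 3 * 1) / 2) := by positivity
    omega
  | s + 1, hn, hp => by
    rw [g_of_mod_ne s.add_one_ne_zero (by omega), g_of_mod_eq (by omega) hp,
      show (n - 3 * (s + 1) + 3) / 2 = (n - 3 * (s + 1 + 1)) / 2 + 3 by omega, Nat.add_sub_cancel]
    generalize (n - 3 * (s + 1 + 1)) / 2 = a
    have : 0 < 3 ^ s * 2 ^ a := by positivity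
    calc 3 ^ s * 2 ^ (a + 3) = 8 * (3 ^ s * 2 ^ a) := by ring
      _ < 9 * (3 ^ s * 2 ^ a) := by omega
      _ = 3 ^ (s + 1 + 1) * 2 ^ a := by ring

lemma g_succ_eq : ∀ {r}, 3 * r + 2 ≤ n → n % 2 ≠ (r + 1) % 2 → g n (r + 1) = g n r
  | 0, hn, hp => by
    rw [zero_add] at hp ⊢
    rw [g_zero, g_of_mod_ne one_ne_zero hp, Nat.sub_self, pow_zero, one_mul]
    congr 1; omega
  | s + 1, hn, hp => by
    rw [g_of_mod_ne (by omega) hp, g_of_mod_eq s.add_one_ne_zero (by omega)]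
    congr 2; omega

lemma g_le_g_succ (hn : 3 * r + 2 ≤ n) : g n r ≤ g n (r + 1) := by
  by_cases hp : n % 2 = (r + 1) % 2
  · exact (g_lt_g_succ hn hp).le
  · exact (g_succ_eq hn hp).ge

end Step

lemma g_le_g_of_le {n q r : ℕ} (hqr : q ≤ r) (hn : 3 * r - 1 ≤ n) : g n q ≤ g n r := by
  induction r, hqr using Nat.le_induction with
  | base => exact le_rfl
  | succ r _ ih => exact (ih (by omega)).trans (g_le_g_succ (by omega))

lemma g_lt_g_of_add_one_lt {n q r : ℕ} (hqr : q + 1 < r) (hn : 3 * r - 1 ≤ n) :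
    g n q < g n r := by
  obtain ⟨s, rfl⟩ : ∃ s, r = s + 2 := ⟨r - 2, by omega⟩
  by_cases hp : n % 2 = (s + 2) % 2
  · exact (g_le_g_of_le (by omega) (by omega)).trans_lt (g_lt_g_succ (by omega) hp)
  · calc g n q ≤ g n s := g_le_g_of_le (by omega) (by omega)
      _ < g n (s + 1) := g_lt_g_succ (by omega) (by omega)
      _ = g n (s + 2) := (g_succ_eq (by omega) hp).symm

theorem g_mono_in_r (n r q : ℕ) (hq : q < r) (hn : 3 * r - 1 ≤ n) :
    g n q ≤ g n r ∧ (g n r = g n q ↔ n % 2 ≠ r % 2 ∧ q = r - 1) := by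
  obtain ⟨s, rfl⟩ : ∃ s, r = s + 1 := ⟨r - 1, by omega⟩
  have hns : 3 * s + 2 ≤ n := by omega
  refine ⟨g_le_g_of_le hq.le hn, fun heq => ?_, ?_⟩
  · obtain rfl : q = s := by
      by_contra hne
      exact (g_lt_g_of_add_one_lt (by omega) hn).ne' heq
    exact ⟨fun hp => (g_lt_g_succ hns hp).ne' heq, rfl⟩
  · rintro ⟨hp, rfl⟩
    exact g_succ_eq hns hp
end

section
/- Define c(n,r) = 3^{r−1} · 2^{(n−3r+2)/2} + 2^{r−1} if n ≡ r (mod 2) and c(n,r) = 3^r · 2^{(n−3r−1)/2} if n ≢ r (mod 2); set c(n,0) = 2^{(n−2)/2} + 1 if n is even and 2^{(n−1)/2} if n is odd. Then for integers r > q ≥ 0 and n ≥ 3r, c(n,r) ≥ c(n,q), with equality if and only if (n,r,q) = (4,1,0) or (7,2,1). -/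
/-- The function `c(n,r)`: `3^{r−1}·2^{(n−3r+2)/2} + 2^{r−1}` if `n ≡ r (mod 2)`,
`3^r·2^{(n−3r−1)/2}` if `n ≢ r (mod 2)`, with `c(n,0) = 2^{(n−2)/2}+1` for even `n`
and `2^{(n−1)/2}` for odd `n`. -/
def c (n r : ℕ) : ℕ :=
  if r = 0 then (if Even n then 2 ^ ((n - 2) / 2) + 1 else 2 ^ ((n - 1) / 2))
  else if n % 2 = r % 2 then 3 ^ (r - 1) * 2 ^ ((n - 3 * r + 2) / 2) + 2 ^ (r - 1)
  else 3 ^ r * 2 ^ ((n - 3 * r - 1) / 2)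

/-!
It suffices to compare consecutive values. Raising `r` by one trades a factor `2^{3/2}` for a
factor `3`, and comparing the closed forms of `c(n,r)` and `c(n,r+1)` on each parity class of
`n - 3r` gives `c(n,r) < c(n,r+1)`, except for `(n,r) = (4,0)` and `(7,1)`, where the lower-order
terms `1` resp. `2^{r-1}` make up exactly the difference. Both exceptional steps have
`n = 3(r+1)+1`, i.e. they are the last admissible step for their `n`, so a chain of two or more
steps is always strict.
-/

theorem c_zero_even (m : ℕ) : c (2 * m + 2) 0 = 2 ^ m + 1 := by
  have he : Even (2 * m + 2) := ⟨m + 1, by ring⟩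
  rw [c, if_pos rfl, if_pos he, show (2 * m + 2 - 2) / 2 = m by omega]

theorem c_zero_odd (m : ℕ) : c (2 * m + 1) 0 = 2 ^ m := by
  rw [c, if_pos rfl, if_neg (Nat.not_even_iff_odd.mpr (odd_two_mul_add_one m)),
    show (2 * m + 1 - 1) / 2 = m by omega]

theorem c_same_parity (s k : ℕ) :
    c (3 * (s + 1) + 2 * k) (s + 1) = 3 ^ s * 2 ^ (k + 1) + 2 ^ s := by
  simp only [c, if_neg s.succ_ne_zero,
    if_pos (show (3 * (s + 1) + 2 * k) % 2 = (s + 1) % 2 by omega),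
    Nat.add_sub_cancel, show (3 * (s + 1) + 2 * k - 3 * (s + 1) + 2) / 2 = k + 1 by omega]

theorem c_other_parity {r : ℕ} (hr : r ≠ 0) (k : ℕ) :
    c (3 * r + 2 * k + 1) r = 3 ^ r * 2 ^ k := by
  simp only [c, if_neg hr, if_neg (show ¬(3 * r + 2 * k + 1) % 2 = r % 2 by omega),
    show (3 * r + 2 * k + 1 - 3 * r - 1) / 2 = k by omega]

theorem two_pow_lt_three_pow_mul_two_pow {s k : ℕ} (h : s ≠ 0 ∨ k ≠ 0) :
    2 ^ s < 3 ^ s * 2 ^ k := by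
  rcases h with hs | hk
  · calc 2 ^ s < 3 ^ s := Nat.pow_lt_pow_left (by norm_num) hs
      _ ≤ 3 ^ s * 2 ^ k := Nat.le_mul_of_pos_right _ (by positivity)
  · calc 2 ^ s ≤ 3 ^ s := Nat.pow_le_pow_left (by norm_num) s
      _ < 3 ^ s * 2 ^ k := lt_mul_right (by positivity) (Nat.one_lt_two_pow hk)

theorem c_lt_c_succ {n r : ℕ} (hn : 3 * (r + 1) ≤ n) (h4 : ¬(n = 4 ∧ r = 0))
    (h7 : ¬(n = 7 ∧ r = 1)) : c n r < c n (r + 1) := by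
  rcases r with _ | s
  · obtain ⟨m, rfl | rfl⟩ := Nat.even_or_odd' n
    · obtain ⟨m, rfl⟩ : ∃ m', m = m' + 2 := ⟨m - 2, by omega⟩
      have hm : 2 ≤ 2 ^ m := Nat.one_lt_two_pow (by omega)
      rw [show 2 * (m + 2) = 2 * (m + 1) + 2 by ring, c_zero_even, zero_add,
        show 2 * (m + 1) + 2 = 3 * 1 + 2 * m + 1 by ring, c_other_parity one_ne_zero, pow_succ]
      omega
    · obtain ⟨m, rfl⟩ : ∃ m', m = m' + 1 := ⟨m - 1, by omega⟩
      rw [c_zero_odd, show 2 * (m + 1) + 1 = 3 * (0 + 1) + 2 * m by ring, c_same_parity]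
      simp
  · obtain ⟨k, hk | hk⟩ := Nat.even_or_odd' (n - 3 * (s + 2))
    · rw [show n = 3 * (s + 1) + 2 * (k + 1) + 1 by omega, c_other_parity s.succ_ne_zero,
        show 3 * (s + 1) + 2 * (k + 1) + 1 = 3 * (s + 1 + 1) + 2 * k by ring, c_same_parity]
      exact Nat.lt_add_of_pos_right (by positivity)
    · have hsk : 2 ^ s < 3 ^ s * 2 ^ k := two_pow_lt_three_pow_mul_two_pow (by omega)
      rw [show n = 3 * (s + 1) + 2 * (k + 2) by omega, c_same_parity,
        show 3 * (s + 1) + 2 * (k + 2) = 3 * (s + 1 + 1) + 2 * k + 1 by ring,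
        c_other_parity (by omega)]
      have h9 : 3 ^ (s + 1 + 1) * 2 ^ k = 3 ^ s * 2 ^ (k + 2 + 1) + 3 ^ s * 2 ^ k := by ring
      linarith

theorem c_le_c_succ {n r : ℕ} (hn : 3 * (r + 1) ≤ n) : c n r ≤ c n (r + 1) := by
  by_cases h4 : n = 4 ∧ r = 0
  · obtain ⟨rfl, rfl⟩ := h4; decide
  by_cases h7 : n = 7 ∧ r = 1
  · obtain ⟨rfl, rfl⟩ := h7; decide
  exact (c_lt_c_succ hn h4 h7).le

theorem c_le_c_of_le {n q r : ℕ} (hqr : q ≤ r) (hn : 3 * r ≤ n) : c n q ≤ c n r := by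
  induction r, hqr using Nat.le_induction with
  | base => exact le_rfl
  | succ r _ ih => exact (ih (by omega)).trans (c_le_c_succ hn)

theorem c_mono_in_r (n r q : ℕ) (hq : q < r) (hn : 3 * r ≤ n) :
    c n q ≤ c n r ∧
      (c n r = c n q ↔ (n = 4 ∧ r = 1 ∧ q = 0) ∨ (n = 7 ∧ r = 2 ∧ q = 1)) := by
  refine ⟨c_le_c_of_le hq.le hn, fun heq => ?_, ?_⟩
  · have hr : r = q + 1 := by
      by_contra hr
      have : c n q < c n r :=
        (c_lt_c_succ (by omega) (by omega) (by omega)).trans_le (c_le_c_of_le hq hn)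
      omega
    subst hr
    by_contra hexc
    exact (c_lt_c_succ hn (by omega) (by omega)).ne' heq
  · rintro (⟨rfl, rfl, rfl⟩ | ⟨rfl, rfl, rfl⟩) <;> decide
end
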